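/- Let d' and d'' be two closed unit disks in ℝ² and let e be a vertical line x = c. Suppose the boundary circles of d' and d'' do not intersect in the closed half-plane x ≤ c. Then for the regions restricted to that half-plane, one of the disks' intersections with the half-plane is contained in the other's: either d' ∩ {x ≤ c} ⊆ d'' ∩ {x ≤ c} or d'' ∩ {x ≤ c} ⊆ d' ∩ {x ≤ c}, provided both disks intersect the half-plane and each other. -/

import Mathlib

/-!
If neither containment held, pick `p ∈ d' ∩ H` outside `d''`, `q ∈ d'' ∩ H` outside `d'`, and `r`
in all three sets. Along the broken line `p → r → q`, which stays in `(d' ∪ d'') ∩ H`, the function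
`dist · α - dist · α'` changes sign, so some point `w` of `d' ∩ H` lies on the perpendicular
bisector of `α α'`. Walking from `w` along the bisector in the direction of non-increasing first
coordinate stays in `H` and eventually leaves `d'`; where it does, it meets both circles at once.
-/

open scoped RealInnerProductSpace

section NormedSpace

variable {E : Type*} [NormedAddCommGroup E] [NormedSpace ℝ E]

theorem exists_nonneg_dist_add_smul_eq {w v β : E} {R : ℝ} (hw : dist w β ≤ R) (hv : v ≠ 0) :
    ∃ s : ℝ, 0 ≤ s ∧ dist (w + s • v) β = R := by
  set s₀ := (R + dist w β) / ‖v‖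
  have hv' : 0 < ‖v‖ := norm_pos_iff.2 hv
  have hs₀ : 0 ≤ s₀ := div_nonneg (by linarith [dist_nonneg (x := w) (y := β)]) hv'.le
  have hfar : R ≤ dist (w + s₀ • v) β :=
    calc R = ‖s₀ • v‖ - dist w β := by
          rw [norm_smul, Real.norm_of_nonneg hs₀, div_mul_cancel₀ _ hv'.ne']; ring
      _ ≤ dist (w + s₀ • v) β := by
          have h := norm_sub_le (w - β + s₀ • v) (w - β)
          rw [add_sub_cancel_left] at h
          rw [dist_eq_norm, dist_eq_norm, add_sub_right_comm]
          linarith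
  have hcont : Continuous fun s : ℝ => dist (w + s • v) β := by fun_prop
  obtain ⟨s, hs, hsR⟩ := intermediate_value_Icc hs₀ hcont.continuousOn
    ⟨by simpa using hw, hfar⟩
  exact ⟨s, hs.1, hsR⟩

theorem exists_mem_closedBall_inter_dist_eq {H : Set E} (hH : Convex ℝ H) {α α' p q r : E} {R : ℝ}
    (hp : p ∈ Metric.closedBall α R ∩ H) (hpα : dist p α ≤ dist p α')
    (hq : q ∈ Metric.closedBall α' R ∩ H) (hqα : dist q α' ≤ dist q α)
    (hr : r ∈ Metric.closedBall α R ∩ Metric.closedBall α' R ∩ H) :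
    ∃ w ∈ Metric.closedBall α R ∩ H, dist w α = dist w α' := by
  set f : E → ℝ := fun x => dist x α - dist x α'
  have hf : Continuous f := by fun_prop
  rcases le_total 0 (f r) with hr0 | hr0
  · have hseg : segment ℝ p r ⊆ Metric.closedBall α R ∩ H :=
      ((convex_closedBall α R).inter hH).segment_subset hp ⟨hr.1.1, hr.2⟩
    obtain ⟨w, hw, hfw⟩ := (convex_segment p r).isPreconnected.intermediate_value
      (left_mem_segment ℝ p r) (right_mem_segment ℝ p r) hf.continuousOn
      ⟨by simpa [f] using hpα, hr0⟩
    exact ⟨w, hseg hw, sub_eq_zero.1 hfw⟩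
  · have hseg : segment ℝ r q ⊆ Metric.closedBall α' R ∩ H :=
      ((convex_closedBall α' R).inter hH).segment_subset ⟨hr.1.2, hr.2⟩ hq
    obtain ⟨w, hw, hfw⟩ := (convex_segment r q).isPreconnected.intermediate_value
      (left_mem_segment ℝ r q) (right_mem_segment ℝ r q) hf.continuousOn
      ⟨hr0, by simpa [f] using hqα⟩
    have hweq : dist w α = dist w α' := sub_eq_zero.1 hfw
    exact ⟨w, ⟨Metric.mem_closedBall.2 (hweq ▸ (hseg hw).1), (hseg hw).2⟩, hweq⟩

end NormedSpace

theorem dist_add_smul_eq_dist_add_smul {E : Type*} [NormedAddCommGroup E] [InnerProductSpace ℝ E]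
    {w v α α' : E} (hw : dist w α = dist w α') (hv : ⟪α' - α, v⟫ = 0) (s : ℝ) :
    dist (w + s • v) α = dist (w + s • v) α' := by
  rw [← AffineSubspace.mem_perpBisector_iff_dist_eq] at hw ⊢
  rw [add_comm]
  refine AffineSubspace.vadd_mem_of_mem_direction ?_ hw
  rw [AffineSubspace.direction_perpBisector]
  exact Submodule.smul_mem _ s (Submodule.mem_orthogonal_singleton_iff_inner_right.2 hv)

theorem EuclideanSpace.exists_ne_zero_inner_eq_zero_apply_zero_nonpos
    (u : EuclideanSpace ℝ (Fin 2)) (hu : u ≠ 0) :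
    ∃ v : EuclideanSpace ℝ (Fin 2), v ≠ 0 ∧ ⟪u, v⟫ = 0 ∧ v 0 ≤ 0 := by
  set v : EuclideanSpace ℝ (Fin 2) := !₂[-u 1, u 0]
  have hv : v ≠ 0 := by
    contrapose! hu
    ext i
    fin_cases i
    · simpa [v] using congr_fun (congr_arg (⇑) hu) 1
    · simpa [v] using congr_fun (congr_arg (⇑) hu) 0
  have huv : ⟪u, v⟫ = 0 := by
    simp [v, PiLp.inner_apply, Fin.sum_univ_two]; ring
  rcases le_total (v 0) 0 with h | h
  · exact ⟨v, hv, huv, h⟩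
  · exact ⟨-v, neg_ne_zero.2 hv, by rw [inner_neg_right, huv, neg_zero], by simpa using h⟩

theorem stmt_2_general (α α' : EuclideanSpace ℝ (Fin 2)) (c : ℝ)
    (H : Set (EuclideanSpace ℝ (Fin 2)))
    (hH : H = {x | x 0 ≤ c})
    (hcirc : ¬ ∃ x, dist x α = 1 ∧ dist x α' = 1 ∧ x ∈ H)
    (h12 : (Metric.closedBall α 1 ∩ Metric.closedBall α' 1 ∩ H).Nonempty) :
    Metric.closedBall α 1 ∩ H ⊆ Metric.closedBall α' 1 ∩ H ∨
    Metric.closedBall α' 1 ∩ H ⊆ Metric.closedBall α 1 ∩ H := by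
  rcases eq_or_ne α α' with rfl | hαα'
  · exact Or.inl subset_rfl
  by_contra! ⟨hsub, hsub'⟩
  obtain ⟨p, hp, hp'⟩ := Set.not_subset.1 hsub
  obtain ⟨q, hq, hq'⟩ := Set.not_subset.1 hsub'
  obtain ⟨r, hr⟩ := h12
  have hpα : dist p α ≤ dist p α' :=
    hp.1.out.trans (not_le.1 fun h ↦ hp' ⟨Metric.mem_closedBall.2 h, hp.2⟩).le
  have hqα' : dist q α' ≤ dist q α :=
    hq.1.out.trans (not_le.1 fun h ↦ hq' ⟨Metric.mem_closedBall.2 h, hq.2⟩).le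
  have hHconv : Convex ℝ H :=
    hH ▸ convex_halfSpace_le (EuclideanSpace.proj (0 : Fin 2) : _ →L[ℝ] ℝ).isLinear c
  obtain ⟨w, ⟨hwα, hwH⟩, hw⟩ :=
    exists_mem_closedBall_inter_dist_eq hHconv hp hpα hq hqα' hr
  obtain ⟨v, hv, hvα, hv0⟩ :=
    EuclideanSpace.exists_ne_zero_inner_eq_zero_apply_zero_nonpos (α' - α)
      (sub_ne_zero.2 hαα'.symm)
  obtain ⟨s, hs, hsα⟩ := exists_nonneg_dist_add_smul_eq hwα hv
  refine hcirc ⟨w + s • v, hsα, (dist_add_smul_eq_dist_add_smul hw hvα s).symm.trans hsα, ?_⟩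
  subst hH
  exact add_le_of_le_of_nonpos hwH (mul_nonpos_of_nonneg_of_nonpos hs hv0)

/-- If the boundary circles of two closed unit disks do not intersect in the
half-plane `x ≤ c`, and the two disks overlap each other within that half-plane,
then one disk's intersection with the half-plane contains the other's. -/
theorem stmt_2 (α α' : EuclideanSpace ℝ (Fin 2)) (c : ℝ)
    (H : Set (EuclideanSpace ℝ (Fin 2)))
    (hH : H = {x | x 0 ≤ c})
    (hcirc : ¬ ∃ x, dist x α = 1 ∧ dist x α' = 1 ∧ x ∈ H)
    (h1 : (Metric.closedBall α 1 ∩ H).Nonempty)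
    (h2 : (Metric.closedBall α' 1 ∩ H).Nonempty)
    (h12 : (Metric.closedBall α 1 ∩ Metric.closedBall α' 1 ∩ H).Nonempty) :
    Metric.closedBall α 1 ∩ H ⊆ Metric.closedBall α' 1 ∩ H ∨
    Metric.closedBall α' 1 ∩ H ⊆ Metric.closedBall α 1 ∩ H :=
  stmt_2_general α α' c H hH hcirc h12
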